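/- Let k be a field of characteristic zero, B an integral domain containing k, D a locally nilpotent k-derivation of B with kernel A = ker D, and for each n ≥ 0 let I_n = A ∩ D^n(B). If E is a k-derivation of B with [D,E] = 0 (commutator of operators), then E(I_n) ⊆ I_n for all n ≥ 0. -/

import Mathlib

namespace Module.End

variable {R M : Type*} [Semiring R] [AddCommMonoid M] [Module R M] {f g : Module.End R M}

theorem mapsTo_ker_of_commute (h : Commute f g) :
    Set.MapsTo g (LinearMap.ker f) (LinearMap.ker f) := fun x hx => by
  rw [SetLike.mem_coe, LinearMap.mem_ker] at hx ⊢
  rw [← Module.End.mul_apply, h.eq, Module.End.mul_apply, hx, map_zero]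

theorem mapsTo_range_of_commute (h : Commute f g) :
    Set.MapsTo g (LinearMap.range f) (LinearMap.range f) := by
  rintro _ ⟨y, rfl⟩
  exact ⟨g y, by rw [← Module.End.mul_apply, h.eq, Module.End.mul_apply]⟩

end Module.End

theorem Derivation.commute_toLinearMap_of_lie_eq_zero {R A : Type*} [CommRing R] [CommRing A]
    [Algebra R A] {D E : Derivation R A A} (h : ⁅D, E⁆ = 0) :
    Commute D.toLinearMap E.toLinearMap := by
  rw [commute_iff_lie_eq, ← Derivation.commutator_coe_linear_map, h]
  rfl

theorem stmt_0_general {k B : Type*} [Field k] [CommRing B] [Algebra k B]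
    (D : Derivation k B B)
    (E : Derivation k B B) (hDE : ⁅D, E⁆ = 0)
    (n : ℕ) (x : B)
    (hxA : D x = 0) (hxI : ∃ b : B, (D.toLinearMap ^ n) b = x) :
    D (E x) = 0 ∧ ∃ b : B, (D.toLinearMap ^ n) b = E x := by
  have hcomm := Derivation.commute_toLinearMap_of_lie_eq_zero hDE
  exact ⟨Module.End.mapsTo_ker_of_commute hcomm hxA,
    Module.End.mapsTo_range_of_commute (hcomm.pow_left n) hxI⟩

/-- If `D` is a locally nilpotent `k`-derivation of an integral `k`-domain `B`
with kernel `A` and image ideals `I_n = A ∩ D^n(B)`, and `E` is a `k`-derivation commuting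
with `D`, then `E(I_n) ⊆ I_n` for all `n ≥ 0`. -/
theorem stmt_0 {k B : Type*} [Field k] [CharZero k] [CommRing B] [IsDomain B] [Algebra k B]
    (D : Derivation k B B)
    (hD : ∀ b : B, ∃ n : ℕ, (D.toLinearMap ^ n) b = 0)
    (E : Derivation k B B) (hDE : ⁅D, E⁆ = 0)
    (n : ℕ) (x : B)
    (hxA : D x = 0) (hxI : ∃ b : B, (D.toLinearMap ^ n) b = x) :
    D (E x) = 0 ∧ ∃ b : B, (D.toLinearMap ^ n) b = E x :=
  stmt_0_general D E hDE n x hxA hxI
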